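/- arXiv:2508.02714 — 4 statements merged into one kernel-verified Lean document; each statement's English description precedes it below -/
import Mathlib

section
/- The matrix A = [[0, 1, 0], [gh - u² - (4/3)s², 2u, (8/3)s], [-2su, 2s, u]] has eigenvalues u, u + √(gh + 4s²), and u - √(gh + 4s²); in particular, if gh + 4s² > 0 the matrix is diagonalizable over ℝ with three distinct real eigenvalues. -/
theorem SSWME_L1_eigenvalues (g h u s : ℝ) (hgh : g * h + 4 * s^2 > 0) :
    let A : Matrix (Fin 3) (Fin 3) ℝ :=
      !![0, 1, 0;
         g * h - u^2 - (4/3) * s^2, 2 * u, (8/3) * s;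
         -2 * s * u, 2 * s, u]
    let lam : Fin 3 → ℝ := ![u, u + Real.sqrt (g * h + 4 * s^2), u - Real.sqrt (g * h + 4 * s^2)]
    (∀ i, (A - lam i • (1 : Matrix (Fin 3) (Fin 3) ℝ)).det = 0) ∧
    (∀ i j, i ≠ j → lam i ≠ lam j) ∧
    ∃ P : Matrix (Fin 3) (Fin 3) ℝ, IsUnit P.det ∧
      P * A * P⁻¹ = Matrix.diagonal lam := by
  intro A lam
  set c := Real.sqrt (g * h + 4 * s^2) with hcdef
  have hc2 : c ^ 2 = g * h + 4 * s ^ 2 := by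
    rw [hcdef, Real.sq_sqrt hgh.le]
  have hc0 : 0 < c := Real.sqrt_pos.mpr hgh
  refine ⟨?_, ?_, ?_⟩
  · intro i
    fin_cases i <;>
      simp [A, lam, Matrix.det_fin_three, Matrix.smul_apply, Matrix.one_apply] <;>
      nlinarith [hc2]
  · intro i j hij
    fin_cases i <;> fin_cases j <;> simp_all [lam] <;> linarith [Real.sqrt_pos.mpr hgh]
  · set V : Matrix (Fin 3) (Fin 3) ℝ :=
      !![8 * s, 1, 1;
         8 * s * u, u + c, u - c;
         4 * s^2 - 3 * g * h, 2 * s, 2 * s] with hVdef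
    have hVdet : V.det = 6 * c * (g * h + 4 * s ^ 2) := by
      simp [hVdef, Matrix.det_fin_three]; ring
    have hV : IsUnit V.det := by
      rw [hVdet]
      exact isUnit_iff_ne_zero.mpr (by positivity)
    refine ⟨V⁻¹, ?_, ?_⟩
    · exact Matrix.isUnit_nonsing_inv_det V hV
    · have hinv : (V⁻¹)⁻¹ = V := Matrix.nonsing_inv_nonsing_inv V hV
      have hmul : A * V = V * Matrix.diagonal lam := by
        ext i j
        fin_cases i <;> fin_cases j <;>
          simp [A, V, lam, Matrix.mul_apply, Fin.sum_univ_three, Matrix.diagonal] <;>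
          nlinarith [hc2]
      rw [hinv, Matrix.mul_assoc, hmul, ← Matrix.mul_assoc,
        Matrix.nonsing_inv_mul V hV, Matrix.one_mul]
end

section
/- The 4×4 matrix A_H^{L2} (as defined in context) has four real eigenvalues: u + (√3/4)α, u - (√3/4)α, u + √(gh + α²), and u - √(gh + α²). -/
theorem HSSWME_L2_real_eigenvalues (g h u α : ℝ) (hgh : g * h > 0) :
    let A : Matrix (Fin 4) (Fin 4) ℝ :=
      !![0, 1, 0, 0;
         -α^2/3 + g * h - u^2, 2 * u, 4 * α / 3, 4 * α / 3;
         -α^2/8 - α * u / 2, α / 2, α / 2 + u, -α / 4;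
         α^2/8 - α * u / 2, α / 2, α / 4, u - α / 2]
    ∀ lam ∈ ({u + Real.sqrt 3 / 4 * α, u - Real.sqrt 3 / 4 * α,
        u + Real.sqrt (g * h + α^2), u - Real.sqrt (g * h + α^2)} : Set ℝ),
      (A - lam • (1 : Matrix (Fin 4) (Fin 4) ℝ)).det = 0 := by
  intro A lam hlam
  have key : ∀ l : ℝ, (A - l • (1 : Matrix (Fin 4) (Fin 4) ℝ)).det =
      ((l - u)^2 - 3*α^2/16) * ((l - u)^2 - (g*h + α^2)) := by
    intro l
    show (A - l • (1 : Matrix (Fin 4) (Fin 4) ℝ)).det = _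
    simp [A, Matrix.det_succ_row_zero, Fin.sum_univ_succ, Matrix.sub_apply, Matrix.smul_apply,
      Matrix.one_apply, Fin.succAbove]
    ring
  have h3 : (Real.sqrt 3)^2 = 3 := Real.sq_sqrt (by norm_num)
  have hg : (Real.sqrt (g*h + α^2))^2 = g*h + α^2 :=
    Real.sq_sqrt (by positivity)
  rcases hlam with h | h | h | h <;> subst h <;> rw [key]
  · linear_combination (α^2/16 * ((u + Real.sqrt 3/4*α - u)^2 - (g*h+α^2))) * h3
  · linear_combination (α^2/16 * ((u - Real.sqrt 3/4*α - u)^2 - (g*h+α^2))) * h3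
  · linear_combination (((u + Real.sqrt (g*h+α^2) - u)^2 - 3*α^2/16)) * hg
  · linear_combination (((u - Real.sqrt (g*h+α^2) - u)^2 - 3*α^2/16)) * hg
end

section
/- The 4×4 matrix A_H^{Q2} (as defined in context) has four real eigenvalues: u ± 2α/√5 and u ± √(gh + 4α²). -/
/-!
Expanding the determinant, the characteristic polynomial of `A_H^{Q2}` factors as
`((u - λ)² - 4α²/5) ((u - λ)² - (gh + 4α²))`. Both constants are nonnegative once `gh > 0`,
so each quadratic factor has the two real roots `u ± 2α/√5` and `u ± √(gh + 4α²)`.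
-/

noncomputable def hsswmeQ2Matrix (c u α : ℝ) : Matrix (Fin 4) (Fin 4) ℝ :=
  !![0, 1, 0, 0;
     -4 * α^2/3 + c - u^2, 2 * u, 2 * α, 2 * α;
     -16 * α^2/9 - 4 * α * u / 3, 4 * α / 3, 29 * α / 30 + u, 11 * α / 30;
     16 * α^2/9 - 4 * α * u / 3, 4 * α / 3, -11 * α / 30, u - 29 * α / 30]

theorem det_hsswmeQ2Matrix_sub_smul_one (c u α lam : ℝ) :
    (hsswmeQ2Matrix c u α - lam • 1).det =
      ((u - lam) ^ 2 - 4 * α ^ 2 / 5) * ((u - lam) ^ 2 - (c + 4 * α ^ 2)) := by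
  simp [hsswmeQ2Matrix, Matrix.det_succ_row_zero, Fin.sum_univ_succ, Fin.succAbove, Matrix.one_apply]
  ring

theorem HSSWME_Q2_real_eigenvalues (g h u α : ℝ) (hgh : g * h > 0) :
    let A : Matrix (Fin 4) (Fin 4) ℝ :=
      !![0, 1, 0, 0;
         -4 * α^2/3 + g * h - u^2, 2 * u, 2 * α, 2 * α;
         -16 * α^2/9 - 4 * α * u / 3, 4 * α / 3, 29 * α / 30 + u, 11 * α / 30;
         16 * α^2/9 - 4 * α * u / 3, 4 * α / 3, -11 * α / 30, u - 29 * α / 30]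
    ∀ lam ∈ ({u + 2 * α / Real.sqrt 5, u - 2 * α / Real.sqrt 5,
        u + Real.sqrt (g * h + 4 * α^2), u - Real.sqrt (g * h + 4 * α^2)} : Set ℝ),
      (A - lam • (1 : Matrix (Fin 4) (Fin 4) ℝ)).det = 0 := by
  intro A lam hlam
  have h5 : (2 * α / Real.sqrt 5) ^ 2 = 4 * α ^ 2 / 5 := by
    rw [div_pow, Real.sq_sqrt (by norm_num)]; ring
  have hs : Real.sqrt (g * h + 4 * α ^ 2) ^ 2 = g * h + 4 * α ^ 2 :=
    Real.sq_sqrt (by positivity)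
  rw [show A = hsswmeQ2Matrix (g * h) u α from rfl, det_hsswmeQ2Matrix_sub_smul_one]
  rcases hlam with rfl | rfl | rfl | rfl <;>
    simp only [sub_add_cancel_left, sub_sub_cancel, neg_sq, h5, hs, sub_self, zero_mul, mul_zero]
end

section
/- The 5×5 matrix A_H^{Q3} (as defined in context) has five real eigenvalues: u, u ± √(19/45)·α, and u ± √(gh + α²). -/
set_option maxHeartbeats 2000000

theorem HSSWME_Q3_real_eigenvalues (g h u α : ℝ) (hgh : g * h > 0) :
    let A : Matrix (Fin 5) (Fin 5) ℝ :=
      !![0, 1, 0, 0, 0;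
         -α^2/3 + g * h - u^2, 2 * u, 4 * α / 5, 7 * α / 5, 4 * α / 5;
         -5 * α^2/36 - α * u / 4, α / 4, 199 * α / 300 + u, α / 48, -49 * α / 300;
         -2 * α * u / 3, 2 * α / 3, 16 * α / 75, u, -16 * α / 75;
         5 * α^2/36 - α * u / 4, α / 4, 49 * α / 300, -α / 48, u - 199 * α / 300]
    ∀ lam ∈ ({u, u + Real.sqrt (19/45) * α, u - Real.sqrt (19/45) * α,
        u + Real.sqrt (g * h + α^2), u - Real.sqrt (g * h + α^2)} : Set ℝ),
      (A - lam • (1 : Matrix (Fin 5) (Fin 5) ℝ)).det = 0 := by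
  intro A lam hlam
  have key : (A - lam • (1 : Matrix (Fin 5) (Fin 5) ℝ)).det =
      -(lam - u) * ((lam - u)^2 - (19/45) * α^2) * ((lam - u)^2 - (g * h + α^2)) := by
    show Matrix.det (A - lam • 1) = _
    have hA : A - lam • (1 : Matrix (Fin 5) (Fin 5) ℝ) =
      !![0 - lam, 1, 0, 0, 0;
         -α^2/3 + g * h - u^2, 2 * u - lam, 4 * α / 5, 7 * α / 5, 4 * α / 5;
         -5 * α^2/36 - α * u / 4, α / 4, 199 * α / 300 + u - lam, α / 48, -49 * α / 300;
         -2 * α * u / 3, 2 * α / 3, 16 * α / 75, u - lam, -16 * α / 75;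
         5 * α^2/36 - α * u / 4, α / 4, 49 * α / 300, -α / 48, u - 199 * α / 300 - lam] := by
      ext i j
      fin_cases i <;> fin_cases j <;>
        simp [A, Matrix.one_apply] <;> ring
    rw [hA]
    simp [Matrix.det_succ_row_zero, Fin.sum_univ_succ, Fin.succAbove, Fin.castSucc, Fin.castAdd, Fin.castLE]
    ring
  have h1 : Real.sqrt (19/45) ^ 2 = 19/45 := Real.sq_sqrt (by norm_num)
  have h2 : Real.sqrt (g * h + α^2) ^ 2 = g * h + α^2 :=
    Real.sq_sqrt (by positivity)
  simp only [Set.mem_insert_iff, Set.mem_singleton_iff] at hlam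
  rcases hlam with rfl | rfl | rfl | rfl | rfl <;> rw [key]
  · ring
  · linear_combination (-(Real.sqrt (19/45) * α) * α^2 *
      ((Real.sqrt (19/45) * α)^2 - (g * h + α^2))) * h1
  · linear_combination ((Real.sqrt (19/45) * α) * α^2 *
      ((Real.sqrt (19/45) * α)^2 - (g * h + α^2))) * h1
  · linear_combination (-(Real.sqrt (g * h + α^2)) *
      ((Real.sqrt (g * h + α^2))^2 - (19/45) * α^2)) * h2
  · linear_combination ((Real.sqrt (g * h + α^2)) *
      ((Real.sqrt (g * h + α^2))^2 - (19/45) * α^2)) * h2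
end
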